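/- Let L be a nondegenerate even integral lattice and r ∈ L a primitive vector with reflection σ_r ∈ O(L). If σ_r acts as -id on the discriminant group D(L) = L∨/L, and a > 0 is defined appropriately, then either r² = ±2a with div(r) = a odd, or r² = ±a with div(r) = a or a/2; moreover in this situation D(L) is isomorphic to (ℤ/2ℤ)^m × (ℤ/aℤ) for some m ≥ 0. -/

import Mathlib

open Matrix

/-- The subgroup of vectors of `ℚ^ι` with integral coordinates (the lattice `L` inside `L ⊗ ℚ`). -/
def intVecs (ι : Type*) [Fintype ι] : AddSubgroup (ι → ℚ) where
  carrier := {x | ∀ i, ∃ z : ℤ, x i = z}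
  add_mem' := by
    intro a b ha hb i
    obtain ⟨z, hz⟩ := ha i
    obtain ⟨w, hw⟩ := hb i
    exact ⟨z + w, by simp [Pi.add_apply, hz, hw]⟩
  zero_mem' := fun i => ⟨0, by simp⟩
  neg_mem' := by
    intro a ha i
    obtain ⟨z, hz⟩ := ha i
    exact ⟨-z, by simp [Pi.neg_apply, hz]⟩

/-- The dual lattice `L∨ ⊆ L ⊗ ℚ` of the lattice with Gram matrix `B`. -/
def dualLat {ι : Type*} [Fintype ι] (B : Matrix ι ι ℤ) : AddSubgroup (ι → ℚ) where
  carrier := {x | ∀ v : ι → ℤ, ∃ z : ℤ,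
    x ⬝ᵥ (B.map (Int.cast : ℤ → ℚ)).mulVec (fun i => (v i : ℚ)) = z}
  add_mem' := by
    intro a b ha hb v
    obtain ⟨z, hz⟩ := ha v
    obtain ⟨w, hw⟩ := hb v
    exact ⟨z + w, by rw [add_dotProduct, hz, hw]; push_cast; ring⟩
  zero_mem' := fun v => ⟨0, by simp⟩
  neg_mem' := by
    intro a ha v
    obtain ⟨z, hz⟩ := ha v
    exact ⟨-z, by rw [neg_dotProduct, hz]; push_cast; ring⟩

/-- The reflection `σ_r` extended ℚ-linearly: `σ_r(x) = x - (2(x,r)/(r,r))·r`. -/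
def reflQ {ι : Type*} [Fintype ι] (B : Matrix ι ι ℤ) (r : ι → ℤ) (x : ι → ℚ) : ι → ℚ :=
  fun i => x i -
    (2 * (x ⬝ᵥ (B.map (Int.cast : ℤ → ℚ)).mulVec (fun j => (r j : ℚ))) /
      ((r ⬝ᵥ B.mulVec r : ℤ) : ℚ)) * (r i : ℚ)

/-- The discriminant group `D(L) = L∨/L` of the lattice with Gram matrix `B`. -/
abbrev discGroup {ι : Type*} [Fintype ι] (B : Matrix ι ι ℤ) :=
  (dualLat B) ⧸ ((intVecs ι).addSubgroupOf (dualLat B))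

/-!
Write `R = (r,r)` and `d = div(r)`. Applying `σ_r ∈ O(L)` to a `v ∈ L` with `(r,v) = d` and using
that `r` is primitive gives `R ∣ 2d`; together with `d ∣ R` this leaves `|R| = d` or `|R| = 2d`.
For `x ∈ L∨` the hypothesis `σ_r = -id` on `D(L)` reads `2x ≡ (2(x,r)/R) r (mod L)`. Put `s = R`
resp. `s = R/2`, so that `|s| = d`: the class `c` of `r/s ∈ L∨` has order `d` by primitivity, and
`2 D(L) ⊆ ⟨2c⟩` if `|R| = d`, `2 D(L) ⊆ ⟨c⟩` if `|R| = 2d`. In the second case with `d` even, the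
class `g` of an `x₀ ∈ L∨` with `(x₀,r) = 1` satisfies `2g = c`, hence has order `2d`.
It remains to see that a finite abelian group `G` with an element `g` such that `2G ⊆ 2⟨g⟩` is
`(ℤ/2)^m × ℤ/ord(g)`: the quotient `G/⟨g⟩` is an `𝔽₂`-vector space each of whose classes contains
a `2`-torsion element, so a linear section through the `2`-torsion of `G` splits off `⟨g⟩`.
-/

section SplitTwoTorsion

open AddSubgroup

variable {G : Type*} [AddCommGroup G]

theorem nonempty_addEquiv_quotient_prod_zmod (g : G) (s : G ⧸ zmultiples g →+ G)
    (hs : ∀ q, (s q : G ⧸ zmultiples g) = q) :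
    Nonempty (G ≃+ (G ⧸ zmultiples g) × ZMod (addOrderOf g)) := by
  let ι : ZMod (addOrderOf g) →+ G := ZMod.lift _ ⟨zmultiplesHom G g, by simp⟩
  have hι : ∀ k : ℤ, ι k = k • g := fun k => by simp [ι]
  let Φ := s.coprod ι
  have hΦ : Function.Bijective Φ := by
    refine ⟨(injective_iff_map_eq_zero Φ).2 ?_, fun x => ?_⟩
    · rintro ⟨q, t⟩ hqt
      obtain ⟨k, rfl⟩ := ZMod.intCast_surjective t
      obtain rfl : q = 0 := by
        simpa [Φ, hs, hι] using congrArg (QuotientAddGroup.mk (s := zmultiples g)) hqt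
      have hk : k • g = 0 := by simpa [Φ, hι] using hqt
      simpa [ZMod.intCast_zmod_eq_zero_iff_dvd] using addOrderOf_dvd_iff_zsmul_eq_zero.2 hk
    · obtain ⟨k, hk⟩ := mem_zmultiples_iff.1 (QuotientAddGroup.eq_iff_sub_mem.1 (hs x))
      exact ⟨(x, -k), by simp [Φ, hι, hk]⟩
  exact ⟨(AddEquiv.ofBijective Φ hΦ).symm⟩

theorem exists_addEquiv_pi_zmod_two_prod_zmod [Finite G] (g : G)
    (h : ∀ x : G, ∃ k : ℤ, 2 • x = (2 * k) • g) :
    ∃ m : ℕ, Nonempty (G ≃+ (Fin m → ZMod 2) × ZMod (addOrderOf g)) := by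
  let H := zmultiples g
  let T := (nsmulAddMonoidHom (α := G) 2).ker
  have hmod : ∀ x : G, ∃ w ∈ T, x - w ∈ H := by
    intro x
    obtain ⟨k, hk⟩ := h x
    refine ⟨x - k • g, ?_, k, by simp⟩
    rw [AddMonoidHom.mem_ker, nsmulAddMonoidHom_apply, smul_sub, hk, ← natCast_zsmul, smul_smul]
    simp
  let _ : Module (ZMod 2) T := AddCommGroup.zmodModule fun w => Subtype.ext w.2
  let _ : Module (ZMod 2) (G ⧸ H) := AddCommGroup.zmodModule fun q => by
    induction q using QuotientAddGroup.induction_on with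
    | H x =>
      obtain ⟨k, hk⟩ := h x
      rw [← QuotientAddGroup.mk_nsmul, QuotientAddGroup.eq_zero_iff, hk]
      exact zsmul_mem (mem_zmultiples g) _
  let π : T →ₗ[ZMod 2] G ⧸ H := ((QuotientAddGroup.mk' H).comp T.subtype).toZModLinearMap 2
  have hπ : LinearMap.range π = ⊤ := by
    refine LinearMap.range_eq_top.2 fun q => ?_
    induction q using QuotientAddGroup.induction_on with
    | H x =>
      obtain ⟨w, hwT, hw⟩ := hmod x
      exact ⟨⟨w, hwT⟩, (QuotientAddGroup.eq_iff_sub_mem.2 hw).symm⟩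
  obtain ⟨s, hs⟩ := π.exists_rightInverse_of_surjective hπ
  obtain ⟨e⟩ := nonempty_addEquiv_quotient_prod_zmod g (T.subtype.comp s.toAddMonoidHom)
    fun q => LinearMap.congr_fun hs q
  let b := Module.finBasis (ZMod 2) (G ⧸ H)
  exact ⟨_, ⟨e.trans (AddEquiv.prodCongr b.equivFun.toAddEquiv (AddEquiv.refl _))⟩⟩

theorem exists_addEquiv_of_odd_addOrderOf [Finite G] (c : G) (hc : Odd (addOrderOf c))
    (h : ∀ x : G, ∃ t : ℤ, 2 • x = t • c) :
    ∃ m : ℕ, Nonempty (G ≃+ (Fin m → ZMod 2) × ZMod (addOrderOf c)) := by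
  obtain ⟨b, hb⟩ := hc
  refine exists_addEquiv_pi_zmod_two_prod_zmod c fun x => ?_
  obtain ⟨t, ht⟩ := h x
  have hzero : (t * addOrderOf c) • c = 0 :=
    addOrderOf_dvd_iff_zsmul_eq_zero.1 (dvd_mul_left _ _)
  refine ⟨t * (b + 1), ?_⟩
  rw [ht, show 2 * (t * (b + 1)) = t + t * addOrderOf c by push_cast [hb]; ring, add_zsmul,
    hzero, add_zero]

theorem addOrderOf_eq_two_mul_of_two_nsmul_eq {g c : G} (hg : 2 • g = c)
    (hc : Even (addOrderOf c)) : addOrderOf g = 2 * addOrderOf c := by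
  rw [← hg, addOrderOf_nsmul' g two_ne_zero] at hc ⊢
  rcases Nat.even_or_odd (addOrderOf g) with he | ho
  · rw [Nat.gcd_eq_right (even_iff_two_dvd.1 he), Nat.mul_div_cancel' (even_iff_two_dvd.1 he)]
  · rw [ho.coprime_two_right.gcd_eq_one, Nat.div_one] at hc
    exact absurd hc (Nat.not_even_iff_odd.2 ho)

theorem exists_addEquiv_of_two_nsmul_eq [Finite G] {g c : G} (hg : 2 • g = c)
    (hc : Even (addOrderOf c)) (h : ∀ x : G, ∃ t : ℤ, 2 • x = t • c) :
    ∃ m : ℕ, Nonempty (G ≃+ (Fin m → ZMod 2) × ZMod (2 * addOrderOf c)) := by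
  rw [← addOrderOf_eq_two_mul_of_two_nsmul_eq hg hc]
  refine exists_addEquiv_pi_zmod_two_prod_zmod g fun x => (h x).imp fun t ht => ?_
  rw [ht, ← hg, ← natCast_zsmul, smul_smul, Nat.cast_ofNat, mul_comm]

end SplitTwoTorsion

theorem exists_natAbs_eq_and_eq_or_eq_two_mul {d : ℕ} {R : ℤ} (hd : 0 < d) (hdR : (d : ℤ) ∣ R)
    (hRd : R ∣ 2 * d) : ∃ s : ℤ, s.natAbs = d ∧ (R = s ∨ R = 2 * s) := by
  obtain ⟨u, rfl⟩ := hdR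
  have hu : u ∣ 2 := by
    rw [mul_comm 2] at hRd
    exact (mul_dvd_mul_iff_left (by exact_mod_cast hd.ne')).1 hRd
  rcases (Nat.dvd_prime Nat.prime_two).1 (Int.natAbs_dvd_natAbs.2 hu) with h | h <;>
    rcases Int.natAbs_eq_iff.1 h with rfl | rfl
  exacts [⟨d, by simp, Or.inl (by ring)⟩, ⟨-d, by simp, Or.inl (by ring)⟩,
    ⟨d, by simp, Or.inr (by ring)⟩, ⟨-d, by simp, Or.inr (by ring)⟩]

section Lattice

variable {ι : Type*} [Fintype ι] {B : Matrix ι ι ℤ} {r : ι → ℤ}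

def IsPrimitiveVector (r : ι → ℤ) : Prop := ∀ (k : ℤ) (v : ι → ℤ), r = k • v → IsUnit k

theorem IsPrimitiveVector.exists_dotProduct_eq_one (hr : IsPrimitiveVector r) :
    ∃ f : ι → ℤ, f ⬝ᵥ r = 1 := by
  obtain ⟨d, hd⟩ := Submodule.IsPrincipal.principal (Ideal.span (Set.range r))
  rw [Ideal.submodule_span_eq] at hd
  have hdvd : ∀ i, d ∣ r i := fun i =>
    Ideal.mem_span_singleton.1 (hd ▸ Ideal.subset_span ⟨i, rfl⟩)
  choose v hv using hdvd
  have hone : (1 : ℤ) ∈ Ideal.span (Set.range r) := by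
    rw [hd, Ideal.span_singleton_eq_top.2 (hr d v (funext hv))]
    trivial
  exact Ideal.mem_span_range_iff_exists_fun.1 hone

theorem IsPrimitiveVector.dvd_of_forall_dvd_mul (hr : IsPrimitiveVector r) {s t : ℤ}
    (h : ∀ i, s ∣ t * r i) : s ∣ t := by
  obtain ⟨f, hf⟩ := hr.exists_dotProduct_eq_one
  have : s ∣ t * (f ⬝ᵥ r) := by
    rw [dotProduct, Finset.mul_sum]
    exact Finset.dvd_sum fun i _ => by simpa [mul_left_comm] using (h i).mul_left (f i)
  simpa [hf] using this

theorem intCast_dotProduct_map_mulVec (B : Matrix ι ι ℤ) (u v : ι → ℤ) :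
    (fun i => (u i : ℚ)) ⬝ᵥ (B.map (Int.cast : ℤ → ℚ)).mulVec (fun i => (v i : ℚ)) =
      ((u ⬝ᵥ B.mulVec v : ℤ) : ℚ) := by
  simp [dotProduct, mulVec]

theorem dotProduct_mulVec_comm_of_isSymm (hB : B.IsSymm) (u v : ι → ℤ) :
    u ⬝ᵥ B.mulVec v = v ⬝ᵥ B.mulVec u := by
  rw [dotProduct_mulVec, ← vecMul_transpose, hB.eq, dotProduct_comm]

theorem discGroup_mk_eq_zero_iff (x : dualLat B) :
    (x : discGroup B) = 0 ↔ (x : ι → ℚ) ∈ intVecs ι := by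
  rw [QuotientAddGroup.eq_zero_iff, AddSubgroup.mem_addSubgroupOf]

theorem dvd_two_mul_dotProduct_mulVec (hB : B.IsSymm) (hr : IsPrimitiveVector r)
    (hR : r ⬝ᵥ B.mulVec r ≠ 0) (hO : ∀ l : ι → ℤ, reflQ B r (fun i => (l i : ℚ)) ∈ intVecs ι)
    (v : ι → ℤ) : r ⬝ᵥ B.mulVec r ∣ 2 * (r ⬝ᵥ B.mulVec v) := by
  refine hr.dvd_of_forall_dvd_mul fun i => ?_
  obtain ⟨z, hz⟩ := hO v i
  rw [reflQ, intCast_dotProduct_map_mulVec, dotProduct_mulVec_comm_of_isSymm hB v r] at hz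
  refine ⟨v i - z, ?_⟩
  have hRq : ((r ⬝ᵥ B.mulVec r : ℤ) : ℚ) ≠ 0 := Int.cast_ne_zero.2 hR
  qify
  field_simp at hz
  linear_combination -hz

def divVec (r : ι → ℤ) (s : ℤ) : ι → ℚ := fun i => (r i : ℚ) / s

theorem divVec_mem_dualLat {s : ℤ} (hs : s ≠ 0) (h : ∀ v, s ∣ r ⬝ᵥ B.mulVec v) :
    divVec r s ∈ dualLat B := by
  intro v
  obtain ⟨w, hw⟩ := h v
  refine ⟨w, ?_⟩
  have : divVec r s = (s : ℚ)⁻¹ • fun i => (r i : ℚ) := by ext i; simp [divVec, div_eq_inv_mul]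
  rw [this, smul_dotProduct, intCast_dotProduct_map_mulVec, hw, smul_eq_mul, Int.cast_mul]
  exact inv_mul_cancel_left₀ (Int.cast_ne_zero.2 hs) _

theorem zsmul_divVec_mem_intVecs_iff (hr : IsPrimitiveVector r) {s : ℤ} (hs : s ≠ 0) (k : ℤ) :
    k • divVec r s ∈ intVecs ι ↔ s ∣ k := by
  have hsq : (s : ℚ) ≠ 0 := Int.cast_ne_zero.2 hs
  constructor
  · refine fun h => hr.dvd_of_forall_dvd_mul fun i => ?_
    obtain ⟨z, hz⟩ := h i
    refine ⟨z, ?_⟩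
    simp only [divVec, Pi.smul_apply, zsmul_eq_mul] at hz
    field_simp at hz
    exact_mod_cast hz
  · rintro ⟨m, rfl⟩ i
    refine ⟨m * r i, ?_⟩
    simp only [divVec, Pi.smul_apply, zsmul_eq_mul]
    push_cast
    field_simp

theorem addOrderOf_mk_divVec (hr : IsPrimitiveVector r) {s : ℤ} (hs : s ≠ 0)
    (hc : divVec r s ∈ dualLat B) :
    addOrderOf ((⟨divVec r s, hc⟩ : dualLat B) : discGroup B) = s.natAbs := by
  have key : ∀ k : ℤ, k • ((⟨divVec r s, hc⟩ : dualLat B) : discGroup B) = 0 ↔ s ∣ k := by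
    intro k
    rw [← QuotientAddGroup.mk_zsmul, discGroup_mk_eq_zero_iff]
    exact zsmul_divVec_mem_intVecs_iff hr hs k
  refine Nat.dvd_antisymm (Int.natCast_dvd_natCast.1 ?_) (Int.natCast_dvd_natCast.1 ?_)
  · exact addOrderOf_dvd_iff_zsmul_eq_zero.2 ((key _).2 (Int.dvd_natAbs.2 dvd_rfl))
  · exact Int.natAbs_dvd.2 ((key _).1 (addOrderOf_dvd_iff_zsmul_eq_zero.1 dvd_rfl))

theorem reflQ_add_self {x : ι → ℚ} {s j t : ℤ} (hR : r ⬝ᵥ B.mulVec r ≠ 0) (hs : s ≠ 0)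
    (hj : r ⬝ᵥ B.mulVec r * j = 2 * s)
    (ht : x ⬝ᵥ (B.map (Int.cast : ℤ → ℚ)).mulVec (fun i => (r i : ℚ)) = t) :
    reflQ B r x + x = (2 : ℤ) • x - (t * j) • divVec r s := by
  have hRq : ((r ⬝ᵥ B.mulVec r : ℤ) : ℚ) ≠ 0 := Int.cast_ne_zero.2 hR
  have hsq : (s : ℚ) ≠ 0 := Int.cast_ne_zero.2 hs
  have hjq : ((r ⬝ᵥ B.mulVec r : ℤ) : ℚ) * j = 2 * s := by exact_mod_cast hj
  ext i
  simp only [Pi.add_apply, Pi.sub_apply, Pi.smul_apply]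
  simp only [reflQ, divVec, ht, zsmul_eq_mul]
  push_cast
  field_simp
  linear_combination (r i : ℚ) * t * hjq

theorem two_nsmul_discGroup_mk_eq (hminus : ∀ x ∈ dualLat B, reflQ B r x + x ∈ intVecs ι)
    {s j t : ℤ} (hR : r ⬝ᵥ B.mulVec r ≠ 0) (hs : s ≠ 0) (hj : r ⬝ᵥ B.mulVec r * j = 2 * s)
    (hc : divVec r s ∈ dualLat B) (x : dualLat B)
    (ht : (x : ι → ℚ) ⬝ᵥ (B.map (Int.cast : ℤ → ℚ)).mulVec (fun i => (r i : ℚ)) = t) :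
    2 • (x : discGroup B) = (t * j) • ((⟨divVec r s, hc⟩ : dualLat B) : discGroup B) := by
  rw [← sub_eq_zero, ← natCast_zsmul, ← QuotientAddGroup.mk_zsmul, ← QuotientAddGroup.mk_zsmul,
    ← QuotientAddGroup.mk_sub, discGroup_mk_eq_zero_iff]
  simpa [reflQ_add_self hR hs hj ht] using hminus x x.2

variable [DecidableEq ι]

theorem isUnit_det_map_intCast (hB : B.det ≠ 0) : IsUnit (B.map (Int.cast : ℤ → ℚ)).det := by
  change IsUnit ((Int.castRingHom ℚ).mapMatrix B).det
  rw [← RingHom.map_det]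
  exact isUnit_iff_ne_zero.2 (Int.cast_ne_zero.2 hB)

noncomputable def dualVec (B : Matrix ι ι ℤ) (y : ι → ℤ) : ι → ℚ :=
  (fun i => (y i : ℚ)) ᵥ* (B.map (Int.cast : ℤ → ℚ))⁻¹

theorem dualVec_dotProduct (hB : B.det ≠ 0) (y v : ι → ℤ) :
    dualVec B y ⬝ᵥ (B.map (Int.cast : ℤ → ℚ)).mulVec (fun i => (v i : ℚ)) =
      ((y ⬝ᵥ v : ℤ) : ℚ) := by
  rw [dualVec, dotProduct_mulVec, vecMul_vecMul, nonsing_inv_mul _ (isUnit_det_map_intCast hB),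
    vecMul_one]
  simp [dotProduct]

theorem dualVec_mem_dualLat (hB : B.det ≠ 0) (y : ι → ℤ) : dualVec B y ∈ dualLat B :=
  fun v => ⟨y ⬝ᵥ v, dualVec_dotProduct hB y v⟩

theorem dualVec_vecMul (hB : B.det ≠ 0) (z : ι → ℤ) :
    dualVec B (z ᵥ* B) = fun i => (z i : ℚ) := by
  have : (fun i => ((z ᵥ* B) i : ℚ)) = (fun i => (z i : ℚ)) ᵥ* B.map (Int.cast : ℤ → ℚ) := by
    ext i; simp [vecMul, dotProduct]
  rw [dualVec, this, vecMul_vecMul, mul_nonsing_inv _ (isUnit_det_map_intCast hB), vecMul_one]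

theorem exists_dualVec_eq {x : ι → ℚ} (hB : B.det ≠ 0) (hx : x ∈ dualLat B) :
    ∃ y : ι → ℤ, dualVec B y = x := by
  choose y hy using fun j => hx (Pi.single j 1)
  refine ⟨y, ?_⟩
  have : (fun j => (y j : ℚ)) = x ᵥ* B.map (Int.cast : ℤ → ℚ) := by
    ext j; rw [← hy j]; simp [vecMul, dotProduct, mulVec, Pi.single_apply]
  rw [dualVec, this, vecMul_vecMul, mul_nonsing_inv _ (isUnit_det_map_intCast hB), vecMul_one]

-- `D(L)` is an image of `ℤ^ι` under `dualVec`, killed by `det B` as `det B • y = (y adj B) B`.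
theorem finite_discGroup (hB : B.det ≠ 0) : Finite (discGroup B) := by
  let ψ : (ι → ℤ) →+ discGroup B := (QuotientAddGroup.mk' _).comp <|
    (AddMonoidHom.mk' (dualVec B) fun y y' => by
      simp only [dualVec, ← add_vecMul]; congr 1; ext; simp).codRestrict
      (dualLat B) (dualVec_mem_dualLat hB)
  have hψ : Function.Surjective ψ := by
    intro q
    induction q using QuotientAddGroup.induction_on with
    | H x =>
      obtain ⟨y, hy⟩ := exists_dualVec_eq hB x.2
      exact ⟨y, congrArg _ (Subtype.ext hy)⟩
  have := AddGroup.fg_of_surjective hψ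
  refine AddCommGroup.finite_of_fg_isAddTorsion _ fun q => ?_
  obtain ⟨y, rfl⟩ := hψ q
  refine isOfFinAddOrder_iff_zsmul_eq_zero.2 ⟨B.det, hB, ?_⟩
  have hdet : B.det • y = (y ᵥ* B.adjugate) ᵥ* B := by
    rw [vecMul_vecMul, adjugate_mul, vecMul_smul, vecMul_one]
  rw [← map_zsmul, hdet]
  exact (discGroup_mk_eq_zero_iff _).2 fun i =>
    ⟨(y ᵥ* B.adjugate) i, congrFun (dualVec_vecMul hB _) i⟩

theorem exists_discGroup_two_nsmul_eq_zsmul (hB : B.det ≠ 0) (hr : IsPrimitiveVector r)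
    (hminus : ∀ x ∈ dualLat B, reflQ B r x + x ∈ intVecs ι) (hR : r ⬝ᵥ B.mulVec r ≠ 0)
    {s j : ℤ} (hs : s ≠ 0) (hj : r ⬝ᵥ B.mulVec r * j = 2 * s)
    (hdiv : ∀ v, s ∣ r ⬝ᵥ B.mulVec v) :
    ∃ c : discGroup B, addOrderOf c = s.natAbs ∧
      (∀ y : discGroup B, ∃ t : ℤ, 2 • y = (t * j) • c) ∧ ∃ g : discGroup B, 2 • g = j • c := by
  have hc := divVec_mem_dualLat hs hdiv
  refine ⟨_, addOrderOf_mk_divVec hr hs hc, fun y => ?_, ?_⟩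
  · induction y using QuotientAddGroup.induction_on with
    | H x =>
      obtain ⟨t, ht⟩ := x.2 r
      exact ⟨t, two_nsmul_discGroup_mk_eq hminus hR hs hj hc x ht⟩
  · obtain ⟨f, hf⟩ := hr.exists_dotProduct_eq_one
    refine ⟨(⟨dualVec B f, dualVec_mem_dualLat hB f⟩ : dualLat B), ?_⟩
    simpa using two_nsmul_discGroup_mk_eq hminus hR hs hj hc _ (t := 1)
      (by rw [dualVec_dotProduct hB, hf, Int.cast_one])

end Lattice

theorem stmt_3_general (n : ℕ) (B : Matrix (Fin n) (Fin n) ℤ)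
    (hsymm : B.IsSymm) (hnd : B.det ≠ 0)
    (r : Fin n → ℤ)
    (hprim : ∀ (k : ℤ) (v : Fin n → ℤ), r = k • v → IsUnit k)
    (hr : r ⬝ᵥ B.mulVec r ≠ 0)
    (divr : ℤ) (hdivpos : 0 < divr)
    (hdiv : ∀ m : ℤ, (∃ v : Fin n → ℤ, r ⬝ᵥ B.mulVec v = m) ↔ divr ∣ m)
    (hO : ∀ l : Fin n → ℤ, reflQ B r (fun i => (l i : ℚ)) ∈ intVecs (Fin n))
    (hminus : ∀ x ∈ dualLat B, reflQ B r x + x ∈ intVecs (Fin n)) :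
    ∃ a : ℤ, 0 < a ∧
      ((((r ⬝ᵥ B.mulVec r = 2 * a) ∨ (r ⬝ᵥ B.mulVec r = -(2 * a))) ∧ divr = a ∧ Odd a) ∨
        (((r ⬝ᵥ B.mulVec r = a) ∨ (r ⬝ᵥ B.mulVec r = -a)) ∧ (divr = a ∨ 2 * divr = a))) ∧
      ∃ m : ℕ, Nonempty (discGroup B ≃+ ((Fin m → ZMod 2) × ZMod a.toNat)) := by
  lift divr to ℕ using hdivpos.le with d
  have := finite_discGroup hnd
  have hRd : r ⬝ᵥ B.mulVec r ∣ 2 * d := by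
    obtain ⟨v, hv⟩ := (hdiv d).2 dvd_rfl
    simpa [hv] using dvd_two_mul_dotProduct_mulVec hsymm hprim hr hO v
  obtain ⟨s, hsd, hR⟩ :=
    exists_natAbs_eq_and_eq_or_eq_two_mul (by exact_mod_cast hdivpos) ((hdiv _).1 ⟨r, rfl⟩) hRd
  have hs : s ≠ 0 := by rintro rfl; simp at hsd; omega
  have hdiv' : ∀ v, s ∣ r ⬝ᵥ B.mulVec v := fun v => Int.natAbs_dvd.1 (hsd ▸ (hdiv _).1 ⟨v, rfl⟩)
  rcases hR with hR | hR
  · obtain ⟨c, hc, h2, -⟩ := exists_discGroup_two_nsmul_eq_zsmul hnd hprim hminus hr hs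
      (j := 2) (by rw [hR, mul_comm]) hdiv'
    obtain ⟨m, e⟩ := exists_addEquiv_pi_zmod_two_prod_zmod c fun y =>
      (h2 y).imp fun t ht => by rw [ht, mul_comm]
    refine ⟨d, by omega, Or.inr ⟨hR ▸ Int.natAbs_eq_iff.1 hsd, Or.inl rfl⟩, m, ?_⟩
    rwa [Int.toNat_natCast, ← hsd, ← hc]
  · obtain ⟨c, hc, h2, g, hg⟩ := exists_discGroup_two_nsmul_eq_zsmul hnd hprim hminus hr hs
      (j := 1) (by rw [hR, mul_one]) hdiv'
    simp only [mul_one, one_smul] at h2 hg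
    have hR' : r ⬝ᵥ B.mulVec r = 2 * d ∨ r ⬝ᵥ B.mulVec r = -(2 * d) := by
      rcases Int.natAbs_eq_iff.1 hsd with h | h <;> rw [hR, h] <;> simp
    rcases Nat.even_or_odd d with he | ho
    · obtain ⟨m, e⟩ := exists_addEquiv_of_two_nsmul_eq hg (hc ▸ hsd ▸ he) h2
      refine ⟨2 * d, by omega, Or.inr ⟨by simpa using hR', Or.inr rfl⟩, m, ?_⟩
      rwa [show (2 * (d : ℤ)).toNat = 2 * d by omega, ← hsd, ← hc]
    · obtain ⟨m, e⟩ := exists_addEquiv_of_odd_addOrderOf c (hc ▸ hsd ▸ ho) h2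
      refine ⟨d, by omega, Or.inl ⟨hR', rfl, by exact_mod_cast ho⟩, m, ?_⟩
      rwa [Int.toNat_natCast, ← hsd, ← hc]

/-- If `r` is primitive in a nondegenerate even lattice, `σ_r ∈ O(L)` and `σ_r`
acts as `-id` on the discriminant group `D(L)`, then for some `a > 0` either `r² = ±2a` with
`div(r) = a` odd, or `r² = ±a` with `div(r) = a` or `a/2`; moreover
`D(L) ≅ (ℤ/2ℤ)^m × (ℤ/aℤ)` for some `m ≥ 0`. -/
theorem stmt_3 (n : ℕ) (B : Matrix (Fin n) (Fin n) ℤ)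
    (hsymm : B.IsSymm) (hnd : B.det ≠ 0)
    (heven : ∀ v : Fin n → ℤ, Even (v ⬝ᵥ B.mulVec v))
    (r : Fin n → ℤ)
    (hprim : ∀ (k : ℤ) (v : Fin n → ℤ), r = k • v → IsUnit k)
    (hr : r ⬝ᵥ B.mulVec r ≠ 0)
    (divr : ℤ) (hdivpos : 0 < divr)
    (hdiv : ∀ m : ℤ, (∃ v : Fin n → ℤ, r ⬝ᵥ B.mulVec v = m) ↔ divr ∣ m)
    (hO : ∀ l : Fin n → ℤ, reflQ B r (fun i => (l i : ℚ)) ∈ intVecs (Fin n))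
    (hminus : ∀ x ∈ dualLat B, reflQ B r x + x ∈ intVecs (Fin n)) :
    ∃ a : ℤ, 0 < a ∧
      ((((r ⬝ᵥ B.mulVec r = 2 * a) ∨ (r ⬝ᵥ B.mulVec r = -(2 * a))) ∧ divr = a ∧ Odd a) ∨
        (((r ⬝ᵥ B.mulVec r = a) ∨ (r ⬝ᵥ B.mulVec r = -a)) ∧ (divr = a ∨ 2 * divr = a))) ∧
      ∃ m : ℕ, Nonempty (discGroup B ≃+ ((Fin m → ZMod 2) × ZMod a.toNat)) :=
  stmt_3_general n B hsymm hnd r hprim hr divr hdivpos hdiv hO hminus
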